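/- arXiv:2208.09452 — 7 statements merged into one kernel-verified Lean document; each statement's English description precedes it below -/
import Mathlib

section
/- For every real number t > 0, t·log t − t + 1 ≥ 3(t−1)² / (2(2+t)); equivalently, 2(2+t)(t·log t − t + 1) − 3(t−1)² ≥ 0. -/
/-!
Both sides vanish at `t = 1`, so it suffices to show that
`F t = 2(2+t)(t log t - t + 1) - 3(t-1)²` is minimal at `1` on `(0, ∞)`.
Its derivative is `F' t = 4 ((t+1) log t - 2(t-1))`, and the bracket is monotone on `(0, ∞)`
(its derivative `log t + 1/t - 1` is nonnegative), vanishes at `1`, hence has the sign of `t - 1`.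
-/

open Real Set

lemma hasDerivAt_add_one_mul_log_sub {x : ℝ} (hx : 0 < x) :
    HasDerivAt (fun y => (y + 1) * log y - 2 * (y - 1)) (log x + x⁻¹ - 1) x := by
  have h := (((hasDerivAt_id x).add_const 1).mul (hasDerivAt_log hx.ne')).sub
    (((hasDerivAt_id x).sub_const 1).const_mul 2)
  refine h.congr_deriv ?_
  simp only [id]
  field_simp
  ring

lemma monotoneOn_add_one_mul_log_sub :
    MonotoneOn (fun y => (y + 1) * log y - 2 * (y - 1)) (Ioi 0) := by
  refine monotoneOn_of_hasDerivWithinAt_nonneg (convex_Ioi 0) (f' := fun x => log x + x⁻¹ - 1)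
    (fun x hx => (hasDerivAt_add_one_mul_log_sub hx).continuousAt.continuousWithinAt) ?_ ?_
  · rw [interior_Ioi]
    exact fun x hx => (hasDerivAt_add_one_mul_log_sub hx).hasDerivWithinAt
  · rw [interior_Ioi]
    intro x hx
    linarith [one_sub_inv_le_log_of_pos hx]

lemma two_mul_sub_one_le_add_one_mul_log {x : ℝ} (hx : 1 ≤ x) :
    2 * (x - 1) ≤ (x + 1) * log x := by
  have := monotoneOn_add_one_mul_log_sub (mem_Ioi.2 one_pos) (mem_Ioi.2 (one_pos.trans_le hx)) hx
  simp only [log_one] at this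
  linarith

lemma add_one_mul_log_le_two_mul_sub_one {x : ℝ} (hx₀ : 0 < x) (hx : x ≤ 1) :
    (x + 1) * log x ≤ 2 * (x - 1) := by
  have := monotoneOn_add_one_mul_log_sub (mem_Ioi.2 hx₀) (mem_Ioi.2 one_pos) hx
  simp only [log_one] at this
  linarith

lemma hasDerivAt_two_mul_two_add_mul_sub {x : ℝ} (hx : 0 < x) :
    HasDerivAt (fun y => 2 * (2 + y) * (y * log y - y + 1) - 3 * (y - 1) ^ 2)
      (4 * ((x + 1) * log x - 2 * (x - 1))) x := by
  have h := ((((hasDerivAt_id x).const_add 2).const_mul 2).mul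
    ((((hasDerivAt_id x).mul (hasDerivAt_log hx.ne')).sub (hasDerivAt_id x)).add_const 1)).sub
    ((((hasDerivAt_id x).sub_const 1).pow 2).const_mul 3)
  refine h.congr_deriv ?_
  simp only [id, Pi.mul_apply, Pi.sub_apply]
  field_simp
  ring

lemma isMinOn_two_mul_two_add_mul_sub :
    IsMinOn (fun y => 2 * (2 + y) * (y * log y - y + 1) - 3 * (y - 1) ^ 2) (Ioi 0) 1 := by
  have hderiv {x : ℝ} (hx : 0 < x) := (hasDerivAt_two_mul_two_add_mul_sub hx).deriv
  refine isMinOn_Ioi_of_deriv (hasDerivAt_two_mul_two_add_mul_sub one_pos).continuousAt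
    (fun x hx => (hasDerivAt_two_mul_two_add_mul_sub hx.1).differentiableAt.differentiableWithinAt)
    (fun x hx => (hasDerivAt_two_mul_two_add_mul_sub
      (one_pos.trans hx)).differentiableAt.differentiableWithinAt) ?_ ?_
  · intro x hx
    rw [hderiv hx.1]
    linarith [add_one_mul_log_le_two_mul_sub_one hx.1 hx.2.le]
  · intro x hx
    rw [hderiv (one_pos.trans hx)]
    linarith [two_mul_sub_one_le_add_one_mul_log hx.le]

/-- For every real `t > 0`, `t·log t − t + 1 ≥ 3(t−1)² / (2(2+t))`; equivalently,
`2(2+t)(t·log t − t + 1) − 3(t−1)² ≥ 0`. -/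
theorem stmt_1 :
    ∀ t : ℝ, 0 < t →
      3 * (t - 1) ^ 2 / (2 * (2 + t)) ≤ t * Real.log t - t + 1 ∧
        0 ≤ 2 * (2 + t) * (t * Real.log t - t + 1) - 3 * (t - 1) ^ 2 := by
  intro t ht
  have hmin : 0 ≤ 2 * (2 + t) * (t * log t - t + 1) - 3 * (t - 1) ^ 2 := by
    simpa using isMinOn_two_mul_two_add_mul_sub (mem_Ioi.2 ht)
  refine ⟨?_, hmin⟩
  rw [div_le_iff₀ (by positivity)]
  linarith
end

section
/- For all real numbers p > 0 and q > 0, p·log(p/q) − p + q ≥ 3(p−q)² / (2(p+2q)). -/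
/-! The rational function `r t = (t - 1)(5t + 1) / (2t(t + 2))` satisfies `r 1 = log 1 = 0` and
`(log - r)' t = (t - 1)³ / (t²(t + 2)²)`, which has the sign of `t - 1`; so `log - r` is minimal
at `t = 1`, i.e. `r ≤ log` on `(0, ∞)`. Multiplying by `t` and rearranging gives
`t log t - t + 1 ≥ 3(t - 1)² / (2(2 + t))`, and `t = p / q` scaled by `q` is the theorem. -/

open Real Set

lemma le_of_hasDerivAt_of_sub_mul_nonneg {f f' : ℝ → ℝ} {a b : ℝ}
    (hf : ∀ x ∈ uIcc a b, HasDerivAt f (f' x) x) (hf' : ∀ x ∈ uIcc a b, 0 ≤ (x - a) * f' x) :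
    f a ≤ f b := by
  rcases le_total a b with hab | hba
  · rw [uIcc_of_le hab] at hf hf'
    refine monotoneOn_of_hasDerivWithinAt_nonneg (convex_Icc a b)
      (fun x hx => (hf x hx).continuousAt.continuousWithinAt)
      (fun x hx => (hf x (interior_subset hx)).hasDerivWithinAt) (fun x hx => ?_)
      (left_mem_Icc.2 hab) (right_mem_Icc.2 hab) hab
    rw [interior_Icc] at hx
    exact nonneg_of_mul_nonneg_right (hf' x (Ioo_subset_Icc_self hx)) (sub_pos.2 hx.1)
  · rw [uIcc_of_ge hba] at hf hf'
    refine antitoneOn_of_hasDerivWithinAt_nonpos (convex_Icc b a)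
      (fun x hx => (hf x hx).continuousAt.continuousWithinAt)
      (fun x hx => (hf x (interior_subset hx)).hasDerivWithinAt) (fun x hx => ?_)
      (left_mem_Icc.2 hba) (right_mem_Icc.2 hba) hba
    rw [interior_Icc] at hx
    exact nonpos_of_mul_nonneg_right (hf' x (Ioo_subset_Icc_self hx)) (sub_neg.2 hx.2)

lemma hasDerivAt_log_sub_rational {x : ℝ} (hx : 0 < x) :
    HasDerivAt (fun t => log t - (t - 1) * (5 * t + 1) / (2 * t * (t + 2)))
      ((x - 1) ^ 3 / (x ^ 2 * (x + 2) ^ 2)) x := by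
  have hnum : HasDerivAt (fun t : ℝ => (t - 1) * (5 * t + 1)) (1 * (5 * x + 1) + (x - 1) * (5 * 1)) x :=
    ((hasDerivAt_id' x).sub_const 1).mul (((hasDerivAt_id' x).const_mul 5).add_const 1)
  have hden : HasDerivAt (fun t : ℝ => 2 * t * (t + 2)) (2 * 1 * (x + 2) + 2 * x * 1) x :=
    ((hasDerivAt_id' x).const_mul 2).mul ((hasDerivAt_id' x).add_const 2)
  refine ((hasDerivAt_log hx.ne').sub (hnum.div hden (by positivity))).congr_deriv ?_
  field_simp
  ring

lemma rational_le_log {t : ℝ} (ht : 0 < t) : (t - 1) * (5 * t + 1) / (2 * t * (t + 2)) ≤ log t := by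
  have hpos : ∀ x ∈ uIcc 1 t, 0 < x := fun x hx => lt_of_lt_of_le (lt_min one_pos ht) hx.1
  have hmin := le_of_hasDerivAt_of_sub_mul_nonneg (a := 1) (b := t)
    (fun x hx => hasDerivAt_log_sub_rational (hpos x hx))
    (fun x _ => by
      have h4 : (x - 1) * ((x - 1) ^ 3 / (x ^ 2 * (x + 2) ^ 2)) = (x - 1) ^ 4 / (x ^ 2 * (x + 2) ^ 2) := by
        ring
      rw [h4]
      positivity)
  simp only [log_one, sub_self, zero_mul, zero_div] at hmin
  linarith

theorem three_mul_sq_div_le_mul_log_sub_add_one {t : ℝ} (ht : 0 < t) :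
    3 * (t - 1) ^ 2 / (2 * (2 + t)) ≤ t * log t - t + 1 := by
  have key := mul_le_mul_of_nonneg_left (rational_le_log ht) ht.le
  have h : t * ((t - 1) * (5 * t + 1) / (2 * t * (t + 2))) - t + 1 = 3 * (t - 1) ^ 2 / (2 * (2 + t)) := by
    field_simp
    ring
  linarith

/-- For all reals `p > 0` and `q > 0`, `p·log(p/q) − p + q ≥ 3(p−q)² / (2(p+2q))`. -/
theorem stmt_2 :
    ∀ p q : ℝ, 0 < p → 0 < q →
      3 * (p - q) ^ 2 / (2 * (p + 2 * q)) ≤ p * Real.log (p / q) - p + q := by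
  intro p q hp hq
  have key := mul_le_mul_of_nonneg_left
    (three_mul_sq_div_le_mul_log_sub_add_one (div_pos hp hq)) hq.le
  have hlhs : q * (3 * (p / q - 1) ^ 2 / (2 * (2 + p / q))) = 3 * (p - q) ^ 2 / (2 * (p + 2 * q)) := by
    field_simp
    ring
  have hrhs : q * (p / q * log (p / q) - p / q + 1) = p * log (p / q) - p + q := by
    field_simp
  rwa [hlhs, hrhs] at key
end

section
/- Let p and q be probability density functions on a measure space (X, μ) with p(x) > 0 and q(x) > 0 for all x, such that p·log(p/q) is integrable. Then KL(p,q) ≥ ∫ 3(p(x)−q(x))² / (2(p(x)+2q(x))) dμ(x). -/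
/-!
With `t = a / b`, the pointwise inequality `3 (a - b)² / (2 (a + 2b)) ≤ a log (a / b) - a + b`
becomes `(t - 1)(5t + 1) / (2t(t + 2)) ≤ log t`. The difference of the two sides vanishes at
`t = 1` and has derivative `(t - 1)³ / (t² (t + 2)²)`, so it is minimal there. Integrating the
pointwise inequality, the terms `-p + q` contribute `-1 + 1 = 0`.
-/

open MeasureTheory Set Real

noncomputable def logGap (t : ℝ) : ℝ :=
  log t - (t - 1) * (5 * t + 1) / (2 * t * (t + 2))

lemma hasDerivAt_logGap {s : ℝ} (hs : 0 < s) :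
    HasDerivAt logGap ((s - 1) ^ 3 / (s ^ 2 * (s + 2) ^ 2)) s := by
  have hnum : HasDerivAt (fun t : ℝ => (t - 1) * (5 * t + 1))
      (1 * (5 * s + 1) + (s - 1) * (5 * 1)) s :=
    ((hasDerivAt_id s).sub_const 1).mul (((hasDerivAt_id s).const_mul 5).add_const 1)
  have hden : HasDerivAt (fun t : ℝ => 2 * t * (t + 2)) (2 * 1 * (s + 2) + 2 * s * 1) s :=
    ((hasDerivAt_id s).const_mul 2).mul ((hasDerivAt_id s).add_const 2)
  refine ((hasDerivAt_log hs.ne').sub (hnum.div hden (by positivity))).congr_deriv ?_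
  field_simp
  ring

lemma logGap_nonneg {t : ℝ} (ht : 0 < t) : 0 ≤ logGap t := by
  have hdiff : DifferentiableOn ℝ logGap (Ioi 0) := fun s hs =>
    (hasDerivAt_logGap hs).differentiableAt.differentiableWithinAt
  have hmin : IsMinOn logGap (Ioi 0) 1 := by
    refine isMinOn_Ioi_of_deriv (hasDerivAt_logGap one_pos).continuousAt
      (hdiff.mono Ioo_subset_Ioi_self) (hdiff.mono (Ioi_subset_Ioi zero_le_one)) ?_ ?_
    · rintro s ⟨hs0, hs1⟩
      rw [(hasDerivAt_logGap hs0).deriv]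
      exact div_nonpos_of_nonpos_of_nonneg (Odd.pow_nonpos (by decide) (by linarith))
        (by positivity)
    · intro s (hs1 : 1 < s)
      rw [(hasDerivAt_logGap (zero_lt_one.trans hs1)).deriv]
      have : 0 < s - 1 := by linarith
      positivity
  simpa [logGap] using hmin ht

lemma sq_sub_div_le_mul_log_div {a b : ℝ} (ha : 0 < a) (hb : 0 < b) :
    3 * (a - b) ^ 2 / (2 * (a + 2 * b)) ≤ a * log (a / b) - a + b := by
  have hgap : a * logGap (a / b) =
      a * log (a / b) - a + b - 3 * (a - b) ^ 2 / (2 * (a + 2 * b)) := by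
    unfold logGap
    field_simp
    ring
  linarith [mul_nonneg ha.le (logGap_nonneg (div_pos ha hb))]

theorem stmt_3_general {X : Type*} [MeasurableSpace X] (μ : Measure X)
    (p q : X → ℝ)
    (hp0 : ∀ x, 0 < p x) (hq0 : ∀ x, 0 < q x)
    (hp1 : ∫ x, p x ∂μ = 1) (hq1 : ∫ x, q x ∂μ = 1)
    (hint : Integrable (fun x => p x * Real.log (p x / q x)) μ) :
    ∫ x, 3 * (p x - q x) ^ 2 / (2 * (p x + 2 * q x)) ∂μ ≤
      ∫ x, p x * Real.log (p x / q x) ∂μ := by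
  have hpi := integrable_of_integral_eq_one hp1
  have hqi := integrable_of_integral_eq_one hq1
  have hsub : Integrable (fun x => p x * log (p x / q x) - p x) μ := hint.sub hpi
  have hnonneg : ∀ x, 0 ≤ 3 * (p x - q x) ^ 2 / (2 * (p x + 2 * q x)) := fun x => by
    have := hp0 x; have := hq0 x; positivity
  calc ∫ x, 3 * (p x - q x) ^ 2 / (2 * (p x + 2 * q x)) ∂μ
      ≤ ∫ x, p x * log (p x / q x) - p x + q x ∂μ :=
        -- no integrability of the left integrand is needed: otherwise its integral is `0`
        integral_mono_of_nonneg (ae_of_all _ hnonneg) (hsub.add hqi)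
          (ae_of_all _ fun x => sq_sub_div_le_mul_log_div (hp0 x) (hq0 x))
    _ = ∫ x, p x * log (p x / q x) ∂μ := by
        rw [integral_add hsub hqi, integral_sub hint hpi, hp1, hq1]
        ring

/-- If `p` and `q` are strictly positive probability density functions on a measure
space `(X, μ)` such that `p·log(p/q)` is integrable, then
`KL(p,q) ≥ ∫ 3(p−q)² / (2(p+2q)) dμ`. -/
theorem stmt_3 {X : Type*} [MeasurableSpace X] (μ : Measure X)
    (p q : X → ℝ) (hpm : Measurable p) (hqm : Measurable q)
    (hp0 : ∀ x, 0 < p x) (hq0 : ∀ x, 0 < q x)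
    (hp1 : ∫ x, p x ∂μ = 1) (hq1 : ∫ x, q x ∂μ = 1)
    (hint : Integrable (fun x => p x * Real.log (p x / q x)) μ) :
    ∫ x, 3 * (p x - q x) ^ 2 / (2 * (p x + 2 * q x)) ∂μ ≤
      ∫ x, p x * Real.log (p x / q x) ∂μ :=
  stmt_3_general μ p q hp0 hq0 hp1 hq1 hint
end

section
/- Let p and q be probability density functions on a measure space (X, μ) and let 0 < a ≤ b be real numbers such that a ≤ p(x) ≤ b and a ≤ q(x) ≤ b for all x. Then KL(p,q) ≥ (1/(2b)) · ∫ (p(x) − q(x))² dμ(x), i.e., KL(p,q) ≥ (1/(2b)) · ‖p − q‖₂². -/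
/-!
For `0 < y ≤ b`, the derivative `log (t / y)` of `t ↦ t log (t / y) - (t - y)` lies below
`(t - y) / b` for `0 < t ≤ y` and above it for `y ≤ t ≤ b` (by `1 - 1/u ≤ log u ≤ u - 1`).
Since both this function and `(t - y)² / (2b)` vanish at `t = y`, and the latter has derivative
`(t - y) / b`, we get `x log (x / y) ≥ (x - y) + (x - y)² / (2b)` for `0 < x ≤ b`.
Integrating at `x = p`, `y = q`, the linear term drops out because `p` and `q` both have
integral `1`; since `p, q ≥ a > 0`, `log (p / q)` is bounded and all integrals are finite.
-/

open MeasureTheory Real Set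

section PointwiseBound

variable {b x y t : ℝ}

lemma log_div_le_sub_div_of_le (ht : 0 < t) (hty : t ≤ y) (hyb : y ≤ b) :
    log (t / y) ≤ (t - y) / b := by
  have hy : 0 < y := ht.trans_le hty
  calc log (t / y) ≤ t / y - 1 := log_le_sub_one_of_pos (div_pos ht hy)
    _ = -((y - t) / y) := by field_simp; ring
    _ ≤ -((y - t) / b) := neg_le_neg (div_le_div_of_nonneg_left (by linarith) (by linarith) hyb)
    _ = (t - y) / b := by ring

lemma sub_div_le_log_div_of_le (hy : 0 < y) (hyt : y ≤ t) (htb : t ≤ b) :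
    (t - y) / b ≤ log (t / y) := by
  have ht : 0 < t := hy.trans_le hyt
  calc (t - y) / b ≤ (t - y) / t := div_le_div_of_nonneg_left (by linarith) ht htb
    _ = 1 - (t / y)⁻¹ := by field_simp
    _ ≤ log (t / y) := one_sub_inv_le_log_of_pos (div_pos ht hy)

lemma hasDerivAt_mul_log_div (hy : y ≠ 0) (ht : t ≠ 0) :
    HasDerivAt (fun s ↦ s * log (s / y)) (log (t / y) + 1) t := by
  refine ((hasDerivAt_id' t).mul (((hasDerivAt_id' t).div_const y).log
    (div_ne_zero ht hy))).congr_deriv ?_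
  field_simp

theorem sub_add_sq_div_le_mul_log_div (hx : 0 < x) (hy : 0 < y) (hxb : x ≤ b) (hyb : y ≤ b) :
    x - y + (x - y) ^ 2 / (2 * b) ≤ x * log (x / y) := by
  set g : ℝ → ℝ := fun s ↦ s * log (s / y) - (s - y) - (s - y) ^ 2 / (2 * b)
  set g' : ℝ → ℝ := fun s ↦ log (s / y) - (s - y) / b
  have hg : ∀ s, 0 < s → HasDerivAt g (g' s) s := fun s hs ↦ by
    refine (((hasDerivAt_mul_log_div hy.ne' hs.ne').sub ((hasDerivAt_id' s).sub_const y)).sub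
      (((hasDerivAt_id' s).sub_const y).pow 2 |>.div_const (2 * b))).congr_deriv ?_
    simp only [g']
    field_simp
    ring
  suffices g y ≤ g x by simp [g] at this; linarith
  rcases le_total x y with hxy | hyx
  · refine antitoneOn_of_hasDerivWithinAt_nonpos (convex_Icc x y) (f' := g') ?_ ?_ ?_
      ⟨le_rfl, hxy⟩ ⟨hxy, le_rfl⟩ hxy
    · exact fun s hs ↦ (hg s (hx.trans_le hs.1)).continuousAt.continuousWithinAt
    · rw [interior_Icc]
      exact fun s hs ↦ (hg s (hx.trans hs.1)).hasDerivWithinAt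
    · rw [interior_Icc]
      exact fun s hs ↦ sub_nonpos.2 (log_div_le_sub_div_of_le (hx.trans hs.1) hs.2.le hyb)
  · refine monotoneOn_of_hasDerivWithinAt_nonneg (convex_Icc y x) (f' := g') ?_ ?_ ?_
      ⟨le_rfl, hyx⟩ ⟨hyx, le_rfl⟩ hyx
    · exact fun s hs ↦ (hg s (hy.trans_le hs.1)).continuousAt.continuousWithinAt
    · rw [interior_Icc]
      exact fun s hs ↦ (hg s (hy.trans hs.1)).hasDerivWithinAt
    · rw [interior_Icc]
      exact fun s hs ↦ sub_nonneg.2 (sub_div_le_log_div_of_le hy hs.1.le (hs.2.le.trans hxb))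

end PointwiseBound

lemma abs_log_div_le_log_div {a b x y : ℝ} (ha : 0 < a) (hax : a ≤ x) (hxb : x ≤ b) (hay : a ≤ y)
    (hyb : y ≤ b) : |log (x / y)| ≤ log (b / a) := by
  have hx := ha.trans_le hax
  have hy := ha.trans_le hay
  rw [log_div hx.ne' hy.ne', log_div (hx.trans_le hxb).ne' ha.ne', abs_sub_le_iff]
  constructor <;> linarith [log_le_log ha hax, log_le_log hx hxb, log_le_log ha hay,
    log_le_log hy hyb]

theorem stmt_4_general {X : Type*} [MeasurableSpace X] (μ : Measure X)
    (p q : X → ℝ) (a b : ℝ) (ha : 0 < a)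
    (hpm : Measurable p) (hqm : Measurable q)
    (hpa : ∀ x, a ≤ p x) (hpb : ∀ x, p x ≤ b)
    (hqa : ∀ x, a ≤ q x) (hqb : ∀ x, q x ≤ b)
    (hp1 : ∫ x, p x ∂μ = 1) (hq1 : ∫ x, q x ∂μ = 1) :
    (1 / (2 * b)) * ∫ x, (p x - q x) ^ 2 ∂μ ≤
      ∫ x, p x * Real.log (p x / q x) ∂μ := by
  have hp : Integrable p μ := .of_integral_ne_zero (by simp [hp1])
  have hq : Integrable q μ := .of_integral_ne_zero (by simp [hq1])
  have hpq : Integrable (fun x ↦ p x - q x) μ := hp.sub hq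
  have hsq : Integrable (fun x ↦ (p x - q x) ^ 2) μ := by
    simp only [sq]
    refine hpq.mul_bdd (hpm.sub hqm).aestronglyMeasurable (c := b - a) (ae_of_all _ fun x ↦ ?_)
    rw [Real.norm_eq_abs, abs_sub_le_iff]
    constructor <;> linarith [hpa x, hpb x, hqa x, hqb x]
  have hkl : Integrable (fun x ↦ p x * log (p x / q x)) μ :=
    hp.mul_bdd ((hpm.div hqm).log).aestronglyMeasurable (ae_of_all _ fun x ↦
      abs_log_div_le_log_div ha (hpa x) (hpb x) (hqa x) (hqb x))
  calc (1 / (2 * b)) * ∫ x, (p x - q x) ^ 2 ∂μ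
      = ∫ x, (p x - q x + (p x - q x) ^ 2 / (2 * b)) ∂μ := by
        rw [integral_add hpq (hsq.div_const _), integral_sub hp hq, hp1, hq1, integral_div]
        ring
    _ ≤ ∫ x, p x * log (p x / q x) ∂μ :=
        integral_mono (hpq.add (hsq.div_const _)) hkl fun x ↦ sub_add_sq_div_le_mul_log_div
          (ha.trans_le (hpa x)) (ha.trans_le (hqa x)) (hpb x) (hqb x)

/-- If `p` and `q` are probability density functions on `(X, μ)` with
`0 < a ≤ p(x) ≤ b` and `a ≤ q(x) ≤ b` for all `x`, then
`KL(p,q) ≥ (1/(2b)) · ∫ (p − q)² dμ = (1/(2b)) · ‖p − q‖₂²`. -/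
theorem stmt_4 {X : Type*} [MeasurableSpace X] (μ : Measure X)
    (p q : X → ℝ) (a b : ℝ) (ha : 0 < a) (hab : a ≤ b)
    (hpm : Measurable p) (hqm : Measurable q)
    (hpa : ∀ x, a ≤ p x) (hpb : ∀ x, p x ≤ b)
    (hqa : ∀ x, a ≤ q x) (hqb : ∀ x, q x ≤ b)
    (hp1 : ∫ x, p x ∂μ = 1) (hq1 : ∫ x, q x ∂μ = 1) :
    (1 / (2 * b)) * ∫ x, (p x - q x) ^ 2 ∂μ ≤
      ∫ x, p x * Real.log (p x / q x) ∂μ :=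
  stmt_4_general μ p q a b ha hpm hqm hpa hpb hqa hqb hp1 hq1
end

section
/- Let (A, μ) be a finite measure space, Q : A → ℝ a bounded measurable function, π_t a strictly positive bounded probability density on A, and η > 0, α ≥ 0. Define π_{t+1}(a) = exp((η·Q(a) + log π_t(a)) / (ηα+1)) / Z, where Z = ∫ exp((η·Q(a') + log π_t(a'))/(ηα+1)) dμ(a'). Then π_{t+1} is a probability density and it maximizes the mirror-descent objective F(π) = ∫ π·Q dμ + α·H(π) − (1/η)·KL(π, π_t) over all probability densities π on A with the relevant integrals finite. -/
/-!
Put `β = ηα + 1` and `V = η Q + log π_t`. Since `log (π / π_t) = log π - log π_t`, the objective is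
`F(π) = (1/η) (∫ π V - β ∫ π log π)`, a Gibbs variational functional at temperature `β`.
As `log π_{t+1} = V / β - log Z`, this equals `(β/η) (∫ π log (π_{t+1} / π) + log Z)`, and
`∫ π log (π_{t+1} / π) ≤ ∫ (π_{t+1} - π) = 0` by `log x ≤ x - 1`, with equality at `π = π_{t+1}`.
Because `V` is bounded above, `exp (V / β)` and `exp (V / β) · V` are bounded, so every integral
involving `π_{t+1}` is finite.
-/

open MeasureTheory
open Real (log exp exp_pos log_exp log_div exp_le_exp log_le_log)

namespace Real

theorem mul_log_div_eq_sub (p : ℝ) {x y : ℝ} (hx : p ≠ 0 → x ≠ 0) (hy : p ≠ 0 → y ≠ 0) :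
    p * log (x / y) = p * log x - p * log y := by
  rcases eq_or_ne p 0 with rfl | hp
  · simp
  · rw [log_div (hx hp) (hy hp)]
    ring

theorem mul_log_div_le_sub {p q : ℝ} (hp : 0 ≤ p) (hq : 0 < q) : p * log (q / p) ≤ q - p := by
  rcases hp.eq_or_lt with rfl | hp
  · simpa using hq.le
  · calc p * log (q / p) ≤ p * (q / p - 1) :=
          mul_le_mul_of_nonneg_left (log_le_sub_one_of_pos (div_pos hq hp)) hp.le
      _ = q - p := by field_simp

theorem exp_div_mul_abs_le {β x m : ℝ} (hβ : 0 < β) (hx : x ≤ m) :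
    exp (x / β) * |x| ≤ β + exp (m / β) * |m| := by
  have hm : 0 ≤ exp (m / β) * |m| := by positivity
  rcases le_or_gt x 0 with hx0 | hx0
  · have h : -x ≤ β * exp (-x / β) := by
      have := add_one_le_exp (-x / β)
      rw [div_add_one hβ.ne', div_le_iff₀ hβ] at this
      linarith
    calc exp (x / β) * |x| ≤ exp (x / β) * (β * exp (-x / β)) := by
          rw [abs_of_nonpos hx0]
          exact mul_le_mul_of_nonneg_left h (exp_pos _).le
      _ = β := by rw [mul_left_comm, ← exp_add, neg_div, add_neg_cancel, exp_zero, mul_one]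
      _ ≤ β + exp (m / β) * |m| := le_add_of_nonneg_right hm
  · calc exp (x / β) * |x| ≤ exp (m / β) * |m| := by gcongr
      _ ≤ β + exp (m / β) * |m| := le_add_of_nonneg_left hβ.le

end Real

open Real (mul_log_div_eq_sub mul_log_div_le_sub exp_div_mul_abs_le)

section Integrals

variable {A : Type*} [MeasurableSpace A] {μ : Measure A}

theorem integral_mul_log_div_le_sub {p q : A → ℝ} (hp0 : ∀ a, 0 ≤ p a) (hq0 : ∀ a, 0 < q a)
    (hp : Integrable p μ) (hq : Integrable q μ)
    (hpq : Integrable (fun a => p a * log (q a / p a)) μ) :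
    ∫ a, p a * log (q a / p a) ∂μ ≤ ∫ a, q a ∂μ - ∫ a, p a ∂μ := by
  rw [← integral_sub hq hp]
  exact integral_mono hpq (hq.sub hp) fun a => mul_log_div_le_sub (hp0 a) (hq0 a)

variable [IsFiniteMeasure μ] {V : A → ℝ} {β M : ℝ}

theorem integrable_exp_div_of_le (hβ : 0 < β) (hV : Measurable V) (hVM : ∀ a, V a ≤ M) :
    Integrable (fun a => exp (V a / β)) μ :=
  .of_bound (hV.div_const β).exp.aestronglyMeasurable (exp (M / β)) <| ae_of_all _ fun a => by
    rw [Real.norm_of_nonneg (exp_pos _).le]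
    exact exp_le_exp.2 (div_le_div_of_nonneg_right (hVM a) hβ.le)

theorem integrable_exp_div_mul_of_le (hβ : 0 < β) (hV : Measurable V) (hVM : ∀ a, V a ≤ M) :
    Integrable (fun a => exp (V a / β) * V a) μ :=
  .of_bound ((hV.div_const β).exp.mul hV).aestronglyMeasurable (β + exp (M / β) * |M|) <|
    ae_of_all _ fun a => by
      rw [norm_mul, Real.norm_of_nonneg (exp_pos _).le, Real.norm_eq_abs]
      exact exp_div_mul_abs_le hβ (hVM a)

end Integrals

theorem mul_log_gibbs {A : Type*} {V g : A → ℝ} {β Z : ℝ} (hβ : β ≠ 0) (hZ : 0 < Z)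
    (hg : ∀ a, g a = exp (V a / β) / Z) (p : ℝ) (a : A) :
    p * log (g a) = p * V a / β - log Z * p := by
  rw [hg, log_div (exp_pos _).ne' hZ.ne', log_exp]
  field_simp

section Gibbs

variable {A : Type*} [MeasurableSpace A] {μ : Measure A}

noncomputable def gibbsFunctional (μ : Measure A) (V : A → ℝ) (β : ℝ) (π : A → ℝ) : ℝ :=
  ∫ a, π a * V a ∂μ - β * ∫ a, π a * log (π a) ∂μ

variable {V g π : A → ℝ} {β Z : ℝ}

theorem integrable_mul_log_gibbs (hβ : β ≠ 0) (hZ : 0 < Z) (hg : ∀ a, g a = exp (V a / β) / Z)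
    (hπV : Integrable (fun a => π a * V a) μ) (hπ : Integrable π μ) :
    Integrable (fun a => π a * log (g a)) μ := by
  simp_rw [mul_log_gibbs hβ hZ hg]
  exact (hπV.div_const β).sub (hπ.const_mul _)

theorem gibbsFunctional_eq (hβ : β ≠ 0) (hZ : 0 < Z) (hg : ∀ a, g a = exp (V a / β) / Z)
    (hπ1 : ∫ a, π a ∂μ = 1) (hπV : Integrable (fun a => π a * V a) μ)
    (hπlog : Integrable (fun a => π a * log (π a)) μ) :
    gibbsFunctional μ V β π = β * ∫ a, π a * log (g a / π a) ∂μ + β * log Z := by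
  have hπ : Integrable π μ := .of_integral_ne_zero (by rw [hπ1]; exact one_ne_zero)
  have hg0 : ∀ a, g a ≠ 0 := fun a => by rw [hg]; positivity
  have hlogg := integrable_mul_log_gibbs hβ hZ hg hπV hπ
  have hsplit : ∫ a, π a * log (g a / π a) ∂μ
      = ∫ a, π a * log (g a) ∂μ - ∫ a, π a * log (π a) ∂μ := by
    simp_rw [mul_log_div_eq_sub _ (fun _ => hg0 _) id]
    exact integral_sub hlogg hπlog
  have hlog : ∫ a, π a * log (g a) ∂μ = (∫ a, π a * V a ∂μ) / β - log Z := by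
    simp_rw [mul_log_gibbs hβ hZ hg]
    rw [integral_sub (hπV.div_const β) (hπ.const_mul _), integral_div, integral_const_mul, hπ1,
      mul_one]
  rw [gibbsFunctional, hsplit, hlog]
  field_simp
  ring

theorem gibbsFunctional_gibbs (hβ : β ≠ 0) (hZ : 0 < Z) (hg : ∀ a, g a = exp (V a / β) / Z)
    (hg1 : ∫ a, g a ∂μ = 1) (hgV : Integrable (fun a => g a * V a) μ) :
    gibbsFunctional μ V β g = β * log Z := by
  have hgi : Integrable g μ := .of_integral_ne_zero (by rw [hg1]; exact one_ne_zero)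
  rw [gibbsFunctional_eq hβ hZ hg hg1 hgV (integrable_mul_log_gibbs hβ hZ hg hgV hgi)]
  simp

theorem gibbsFunctional_le (hβ : 0 < β) (hZ : 0 < Z) (hg : ∀ a, g a = exp (V a / β) / Z)
    (hg1 : ∫ a, g a ∂μ = 1) (hπ0 : ∀ a, 0 ≤ π a) (hπ1 : ∫ a, π a ∂μ = 1)
    (hπV : Integrable (fun a => π a * V a) μ) (hπlog : Integrable (fun a => π a * log (π a)) μ) :
    gibbsFunctional μ V β π ≤ β * log Z := by
  have hπ : Integrable π μ := .of_integral_ne_zero (by rw [hπ1]; exact one_ne_zero)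
  have hgi : Integrable g μ := .of_integral_ne_zero (by rw [hg1]; exact one_ne_zero)
  have hg0 : ∀ a, 0 < g a := fun a => by rw [hg]; positivity
  have hdiv : Integrable (fun a => π a * log (g a / π a)) μ := by
    simp_rw [mul_log_div_eq_sub _ (fun _ => (hg0 _).ne') id]
    exact (integrable_mul_log_gibbs hβ.ne' hZ hg hπV hπ).sub hπlog
  have hgibbs : ∫ a, π a * log (g a / π a) ∂μ ≤ 0 := by
    simpa [hg1, hπ1] using integral_mul_log_div_le_sub hπ0 hg0 hπ hgi hdiv
  rw [gibbsFunctional_eq hβ.ne' hZ hg hπ1 hπV hπlog]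
  linarith [mul_nonpos_of_nonneg_of_nonpos hβ.le hgibbs]

end Gibbs

section MirrorDescent

variable {A : Type*} [MeasurableSpace A] {μ : Measure A}

noncomputable def mirrorObjective (μ : Measure A) (Q πt : A → ℝ) (η α : ℝ) (π : A → ℝ) : ℝ :=
  (∫ a, π a * Q a ∂μ) + α * (-∫ a, π a * log (π a) ∂μ) -
    (1 / η) * ∫ a, π a * log (π a / πt a) ∂μ

variable {Q πt π : A → ℝ} {η α : ℝ}

theorem integrable_mul_potential (hπt : ∀ a, πt a ≠ 0) (hπQ : Integrable (fun a => π a * Q a) μ)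
    (hπlog : Integrable (fun a => π a * log (π a)) μ)
    (hπkl : Integrable (fun a => π a * log (π a / πt a)) μ) :
    Integrable (fun a => π a * (η * Q a + log (πt a))) μ := by
  have hV : ∀ a, π a * (η * Q a + log (πt a))
      = η * (π a * Q a) + (π a * log (π a) - π a * log (π a / πt a)) := by
    intro a
    rw [mul_log_div_eq_sub _ id fun _ => hπt a]
    ring
  simp_rw [hV]
  exact (hπQ.const_mul η).add (hπlog.sub hπkl)

theorem mirrorObjective_eq (hη : η ≠ 0) (hπt : ∀ a, πt a ≠ 0)
    (hπQ : Integrable (fun a => π a * Q a) μ)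
    (hπV : Integrable (fun a => π a * (η * Q a + log (πt a))) μ)
    (hπlog : Integrable (fun a => π a * log (π a)) μ) :
    mirrorObjective μ Q πt η α π =
      (1 / η) * gibbsFunctional μ (fun a => η * Q a + log (πt a)) (η * α + 1) π := by
  have hkl : ∀ a, π a * log (π a / πt a)
      = π a * log (π a) - (π a * (η * Q a + log (πt a)) - η * (π a * Q a)) := by
    intro a
    rw [mul_log_div_eq_sub _ id fun _ => hπt a]
    ring
  simp_rw [mirrorObjective, gibbsFunctional, hkl]
  rw [integral_sub hπlog ?_, integral_sub hπV (hπQ.const_mul η), integral_const_mul]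
  · field_simp
    ring
  · exact hπV.sub (hπQ.const_mul η)

end MirrorDescent

/-- The mirror-descent update
`π_{t+1}(a) = exp((η·Q(a) + log π_t(a))/(ηα+1)) / Z` is a probability density and
maximizes `F(π) = ∫ π·Q dμ + α·H(π) − (1/η)·KL(π, π_t)` over all probability
densities `π` on a finite measure space `(A, μ)` with the relevant integrals finite. -/
theorem stmt_10 {A : Type*} [MeasurableSpace A] (μ : Measure A) [IsFiniteMeasure μ]
    (Q : A → ℝ) (hQm : Measurable Q) (C : ℝ) (hQb : ∀ a, |Q a| ≤ C)
    (πt : A → ℝ) (hπtm : Measurable πt) (hπt0 : ∀ a, 0 < πt a)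
    (bt : ℝ) (hπtb : ∀ a, πt a ≤ bt) (hπt1 : ∫ a, πt a ∂μ = 1)
    (η α : ℝ) (hη : 0 < η) (hα : 0 ≤ α)
    (Z : ℝ)
    (hZ : Z = ∫ a, Real.exp ((η * Q a + Real.log (πt a)) / (η * α + 1)) ∂μ)
    (g : A → ℝ)
    (hg : ∀ a, g a = Real.exp ((η * Q a + Real.log (πt a)) / (η * α + 1)) / Z) :
    (∀ a, 0 ≤ g a) ∧ (∫ a, g a ∂μ = 1) ∧
      ∀ π : A → ℝ, Measurable π → (∀ a, 0 ≤ π a) → (∫ a, π a ∂μ = 1) →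
        Integrable (fun a => π a * Q a) μ →
        Integrable (fun a => π a * Real.log (π a)) μ →
        Integrable (fun a => π a * Real.log (π a / πt a)) μ →
        (∫ a, π a * Q a ∂μ) + α * (-∫ a, π a * Real.log (π a) ∂μ) -
            (1 / η) * ∫ a, π a * Real.log (π a / πt a) ∂μ ≤
          (∫ a, g a * Q a ∂μ) + α * (-∫ a, g a * Real.log (g a) ∂μ) -
            (1 / η) * ∫ a, g a * Real.log (g a / πt a) ∂μ := by
  have hβ : 0 < η * α + 1 := by positivity
  have hπt : ∀ a, πt a ≠ 0 := fun a => (hπt0 a).ne'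
  have : NeZero μ := ⟨by rintro rfl; simp at hπt1⟩
  have hVm : Measurable fun a => η * Q a + log (πt a) := (hQm.const_mul η).add hπtm.log
  have hVM : ∀ a, η * Q a + log (πt a) ≤ η * C + log bt := fun a =>
    add_le_add (mul_le_mul_of_nonneg_left (abs_le.1 (hQb a)).2 hη.le)
      (log_le_log (hπt0 a) (hπtb a))
  have hZpos : 0 < Z := hZ ▸ integral_exp_pos (integrable_exp_div_of_le hβ hVm hVM)
  have hg1 : ∫ a, g a ∂μ = 1 := by
    simp_rw [hg]
    rw [integral_div, ← hZ, div_self hZpos.ne']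
  have hgV : Integrable (fun a => g a * (η * Q a + log (πt a))) μ := by
    simp_rw [hg, div_mul_eq_mul_div]
    exact (integrable_exp_div_mul_of_le hβ hVm hVM).div_const Z
  have hgi : Integrable g μ := .of_integral_ne_zero (by rw [hg1]; exact one_ne_zero)
  have hgQ : Integrable (fun a => g a * Q a) μ :=
    hgi.mul_bdd hQm.aestronglyMeasurable (ae_of_all _ hQb)
  refine ⟨fun a => by rw [hg]; positivity, hg1, fun π _ hπ0 hπ1 hπQ hπlog hπkl => ?_⟩
  have hπV := integrable_mul_potential (η := η) hπt hπQ hπlog hπkl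
  show mirrorObjective μ Q πt η α π ≤ mirrorObjective μ Q πt η α g
  rw [mirrorObjective_eq hη.ne' hπt hπQ hπV hπlog,
    mirrorObjective_eq hη.ne' hπt hgQ hgV (integrable_mul_log_gibbs hβ.ne' hZpos hg hgV hgi),
    gibbsFunctional_gibbs hβ.ne' hZpos hg hg1 hgV]
  exact mul_le_mul_of_nonneg_left (gibbsFunctional_le hβ hZpos hg hg1 hπ0 hπ1 hπV hπlog)
    (by positivity)
end

section
/- Let (A, μ) be a finite measure space, Q : A → ℝ bounded measurable, π_t a strictly positive bounded probability density, η > 0, α ≥ 0, and let g(a) = exp((η·Q(a) + log π_t(a))/(ηα+1)) / Z with Z = ∫ exp((η·Q + log π_t)/(ηα+1)) dμ. Then for every strictly positive probability density π with the relevant integrals finite, KL(π, g) = (η/(ηα+1)) · ∫ π(a)·[(1/η)·(log π(a) − log π_t(a)) − Q(a) + α·log π(a)] dμ(a) + log Z. In particular, minimizing the objective J(π) = E_{a∼π}[(1/η)(log π(a) − log π_t(a)) − Q(a) + α·log π(a)] over densities π is equivalent to minimizing KL(π, g). -/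
/-!
The KL divergence to a Gibbs density `g = exp f / Z` is `∫ π log π − ∫ π f + log Z`. For the
exponent `f = (η Q + log π_t) / (η α + 1)` the integrand `π log π − π f` is exactly
`η / (η α + 1)` times the integrand of the objective `J`; boundedness of `Q` and `π_t` makes
`exp f` integrable, so that `Z > 0`.
-/

open MeasureTheory
open Real (log exp)

theorem Real.mul_log_div_exp_div (x t : ℝ) {Z : ℝ} (hZ : Z ≠ 0) :
    x * log (x / (exp t / Z)) = (x * log x - x * t) + log Z * x := by
  rcases eq_or_ne x 0 with rfl | hx
  · simp
  rw [log_div hx (div_ne_zero (exp_ne_zero t) hZ), log_div (exp_ne_zero t) hZ, log_exp]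
  ring

theorem MeasureTheory.integral_mul_log_div_exp_div {A : Type*} [MeasurableSpace A]
    {μ : Measure A} {π f : A → ℝ} {Z : ℝ} (hZ : Z ≠ 0) (hπ : Integrable π μ)
    (hπf : Integrable (fun a => π a * log (π a) - π a * f a) μ) :
    ∫ a, π a * log (π a / (exp (f a) / Z)) ∂μ =
      ∫ a, (π a * log (π a) - π a * f a) ∂μ + log Z * ∫ a, π a ∂μ := by
  simp_rw [Real.mul_log_div_exp_div _ _ hZ]
  rw [integral_add hπf (hπ.const_mul _), integral_const_mul]

theorem MeasureTheory.integrable_exp_of_le {A : Type*} [MeasurableSpace A] {μ : Measure A}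
    [IsFiniteMeasure μ] {f : A → ℝ} (hf : AEStronglyMeasurable f μ) {c : ℝ}
    (hfc : ∀ a, f a ≤ c) : Integrable (fun a => exp (f a)) μ :=
  .of_bound (Real.continuous_exp.comp_aestronglyMeasurable hf) (exp c) <| ae_of_all _ fun a => by
    rw [Real.norm_of_nonneg (Real.exp_pos _).le]
    exact Real.exp_le_exp.mpr (hfc a)

theorem stmt_12_general {A : Type*} [MeasurableSpace A] (μ : Measure A) [IsFiniteMeasure μ]
    (Q : A → ℝ) (hQm : Measurable Q) (C : ℝ) (hQb : ∀ a, |Q a| ≤ C)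
    (πt : A → ℝ) (hπtm : Measurable πt) (hπt0 : ∀ a, 0 < πt a)
    (bt : ℝ) (hπtb : ∀ a, πt a ≤ bt)
    (η α : ℝ) (hη : 0 < η) (hα : 0 ≤ α)
    (Z : ℝ)
    (hZ : Z = ∫ a, Real.exp ((η * Q a + Real.log (πt a)) / (η * α + 1)) ∂μ)
    (g : A → ℝ)
    (hg : ∀ a, g a = Real.exp ((η * Q a + Real.log (πt a)) / (η * α + 1)) / Z)
    (π : A → ℝ)
    (hπ1 : ∫ a, π a ∂μ = 1)
    (hint1 : Integrable (fun a => π a * Q a) μ)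
    (hint2 : Integrable (fun a => π a * Real.log (π a)) μ)
    (hint3 : Integrable (fun a => π a * Real.log (πt a)) μ) :
    ∫ a, π a * Real.log (π a / g a) ∂μ =
      (η / (η * α + 1)) *
          (∫ a, π a * ((1 / η) * (Real.log (π a) - Real.log (πt a)) - Q a +
            α * Real.log (π a)) ∂μ) +
        Real.log Z := by
  have hs : 0 < η * α + 1 := by positivity
  have : NeZero μ := ⟨fun h => by simp [h] at hπ1⟩
  have hexp : Integrable (fun a => exp ((η * Q a + log (πt a)) / (η * α + 1))) μ := by
    refine integrable_exp_of_le (c := (η * C + log bt) / (η * α + 1))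
      (((hQm.const_mul η).add hπtm.log).div_const _).aestronglyMeasurable fun a => ?_
    have hQ : η * Q a ≤ η * C := mul_le_mul_of_nonneg_left ((le_abs_self _).trans (hQb a)) hη.le
    exact div_le_div_of_nonneg_right (add_le_add hQ (Real.log_le_log (hπt0 a) (hπtb a))) hs.le
  have hZ0 : Z ≠ 0 := (hZ ▸ integral_exp_pos hexp).ne'
  have hJ : ∀ a, π a * log (π a) - π a * ((η * Q a + log (πt a)) / (η * α + 1)) =
      η / (η * α + 1) *
        (π a * ((1 / η) * (log (π a) - log (πt a)) - Q a + α * log (π a))) := fun a => by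
    field_simp
    ring
  have hJint : Integrable (fun a =>
      π a * ((1 / η) * (log (π a) - log (πt a)) - Q a + α * log (π a))) μ :=
    (((hint2.const_mul (1 / η + α)).sub (hint3.const_mul (1 / η))).sub hint1).congr
      (ae_of_all _ fun a => by simp only [Pi.sub_apply]; ring)
  rw [funext hg, integral_mul_log_div_exp_div hZ0 (integrable_of_integral_eq_one hπ1)
    (by simpa only [hJ] using hJint.const_mul _), hπ1, mul_one]
  simp_rw [hJ]
  rw [integral_const_mul]

/-- For the mirror-descent target `g(a) = exp((η·Q(a) + log π_t(a))/(ηα+1)) / Z`, every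
strictly positive probability density `π` with the relevant integrals finite satisfies
`KL(π, g) = (η/(ηα+1)) · ∫ π·[(1/η)(log π − log π_t) − Q + α·log π] dμ + log Z`;
in particular, minimizing `J(π) = E_{a∼π}[(1/η)(log π − log π_t) − Q + α·log π]` over
densities is equivalent to minimizing `KL(π, g)`. -/
theorem stmt_12 {A : Type*} [MeasurableSpace A] (μ : Measure A) [IsFiniteMeasure μ]
    (Q : A → ℝ) (hQm : Measurable Q) (C : ℝ) (hQb : ∀ a, |Q a| ≤ C)
    (πt : A → ℝ) (hπtm : Measurable πt) (hπt0 : ∀ a, 0 < πt a)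
    (bt : ℝ) (hπtb : ∀ a, πt a ≤ bt) (hπt1 : ∫ a, πt a ∂μ = 1)
    (η α : ℝ) (hη : 0 < η) (hα : 0 ≤ α)
    (Z : ℝ)
    (hZ : Z = ∫ a, Real.exp ((η * Q a + Real.log (πt a)) / (η * α + 1)) ∂μ)
    (g : A → ℝ)
    (hg : ∀ a, g a = Real.exp ((η * Q a + Real.log (πt a)) / (η * α + 1)) / Z)
    (π : A → ℝ) (hπm : Measurable π) (hπ0 : ∀ a, 0 < π a)
    (hπ1 : ∫ a, π a ∂μ = 1)
    (hint1 : Integrable (fun a => π a * Q a) μ)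
    (hint2 : Integrable (fun a => π a * Real.log (π a)) μ)
    (hint3 : Integrable (fun a => π a * Real.log (πt a)) μ) :
    ∫ a, π a * Real.log (π a / g a) ∂μ =
      (η / (η * α + 1)) *
          (∫ a, π a * ((1 / η) * (Real.log (π a) - Real.log (πt a)) - Q a +
            α * Real.log (π a)) ∂μ) +
        Real.log Z :=
  stmt_12_general μ Q hQm C hQb πt hπtm hπt0 bt hπtb η α hη hα Z hZ g hg π hπ1 hint1 hint2 hint3
end

section
/- Let (A, μ) be a finite measure space, Q_t : A → ℝ bounded measurable, π_t a strictly positive bounded probability density, η > 0, α ≥ 0, and let π_{t+1}(a) = exp((η·Q_t(a) + log π_t(a))/(ηα+1)) / Z with Z the normalizing constant. Then for every strictly positive probability density π with the relevant integrals finite: ∫ (Q_t(a) − α·log π_{t+1}(a)) · (π(a) − π_{t+1}(a)) dμ(a) ≤ (1/η) · (KL(π, π_t) − KL(π_{t+1}, π_t) − KL(π, π_{t+1})). -/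
/-!
The mirror-descent update `π_{t+1} ∝ exp((η Q_t + log π_t)/(ηα + 1))` is the exact minimiser of
its objective, so its first-order condition holds pointwise:
`η (Q_t − α log π_{t+1}) = log (π_{t+1}/π_t) + (ηα + 1) log Z`.
Integrated against `π − π_{t+1}`, the constant term vanishes because both are probability
densities, and the three-point identity
`KL(π, π_t) − KL(π_{t+1}, π_t) − KL(π, π_{t+1}) = ∫ (π − π_{t+1}) log (π_{t+1}/π_t)`
turns what is left into the right-hand side. So the inequality in fact holds with equality.
-/

open MeasureTheory

theorem mul_log_div_eq_mul_log_sub (p : ℝ) {r : ℝ} (hr : r ≠ 0) :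
    p * Real.log (p / r) = p * Real.log p - p * Real.log r := by
  rcases eq_or_ne p 0 with rfl | hp
  · simp
  · rw [Real.log_div hp hr, mul_sub]

section Integrals

variable {A : Type*} [MeasurableSpace A] {μ : Measure A}

theorem integrable_mul_log_of_abs_le [IsFiniteMeasure μ] {g : A → ℝ} (hg : Measurable g)
    {B : ℝ} (hB : ∀ a, |g a| ≤ B) : Integrable (fun a => g a * Real.log (g a)) μ := by
  obtain ⟨K, hK⟩ :=
    (isCompact_Icc (a := -B) (b := B)).exists_bound_of_continuousOn
      Real.continuous_mul_log.continuousOn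
  exact .of_bound (hg.mul hg.log).aestronglyMeasurable K
    (ae_of_all _ fun a => hK _ (abs_le.1 (hB a)))

theorem integral_sub_mul_add_const {p q g : A → ℝ} (c : ℝ) (hp : Integrable p μ)
    (hq : Integrable q μ) (hpq : ∫ a, p a ∂μ = ∫ a, q a ∂μ)
    (hpg : Integrable (fun a => p a * g a) μ) (hqg : Integrable (fun a => q a * g a) μ) :
    ∫ a, (p a - q a) * (g a + c) ∂μ = ∫ a, (p a - q a) * g a ∂μ := by
  have hsplit : ∀ a, (p a - q a) * (g a + c) = (p a - q a) * g a + c * (p a - q a) :=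
    fun a => by ring
  have hpqg : Integrable (fun a => (p a - q a) * g a) μ := by
    simp only [sub_mul]
    exact hpg.sub hqg
  have hpq' : Integrable (fun a => c * (p a - q a)) μ := (hp.sub hq).const_mul c
  rw [integral_congr_ae (ae_of_all _ hsplit), integral_add hpqg hpq',
    integral_const_mul, integral_sub hp hq, hpq, sub_self, mul_zero, add_zero]

theorem integral_sub_mul_log_div {p q r : A → ℝ} (hq : ∀ a, q a ≠ 0) (hr : ∀ a, r a ≠ 0)
    (hpr : Integrable (fun a => p a * Real.log (p a / r a)) μ)
    (hpqr : Integrable (fun a => p a * Real.log (q a / r a)) μ)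
    (hqr : Integrable (fun a => q a * Real.log (q a / r a)) μ) :
    ∫ a, (p a - q a) * Real.log (q a / r a) ∂μ =
      (∫ a, p a * Real.log (p a / r a) ∂μ) - (∫ a, q a * Real.log (q a / r a) ∂μ) -
        ∫ a, p a * Real.log (p a / q a) ∂μ := by
  have hpq : ∀ a, p a * Real.log (p a / q a) =
      p a * Real.log (p a / r a) - p a * Real.log (q a / r a) := fun a => by
    rw [mul_log_div_eq_mul_log_sub _ (hq a), mul_log_div_eq_mul_log_sub _ (hr a),
      Real.log_div (hq a) (hr a)]
    ring
  simp only [sub_mul]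
  rw [integral_sub hpqr hqr, integral_congr_ae (ae_of_all _ hpq), integral_sub hpr hpqr]
  ring

theorem integral_mul_sub_eq_of_mul_eq_log_div_add {p q r g : A → ℝ} {η K : ℝ} (hη : η ≠ 0)
    (hg : ∀ a, η * g a = Real.log (q a / r a) + K) (hp : Integrable p μ) (hq : Integrable q μ)
    (hpq : ∫ a, p a ∂μ = ∫ a, q a ∂μ) (hq0 : ∀ a, q a ≠ 0) (hr0 : ∀ a, r a ≠ 0)
    (hpr : Integrable (fun a => p a * Real.log (p a / r a)) μ)
    (hpqr : Integrable (fun a => p a * Real.log (q a / r a)) μ)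
    (hqr : Integrable (fun a => q a * Real.log (q a / r a)) μ) :
    ∫ a, g a * (p a - q a) ∂μ =
      1 / η * ((∫ a, p a * Real.log (p a / r a) ∂μ) - (∫ a, q a * Real.log (q a / r a) ∂μ) -
        ∫ a, p a * Real.log (p a / q a) ∂μ) := by
  calc ∫ a, g a * (p a - q a) ∂μ
      = 1 / η * ∫ a, (p a - q a) * (Real.log (q a / r a) + K) ∂μ := by
        rw [← integral_const_mul]
        refine integral_congr_ae (ae_of_all _ fun a => ?_)
        simp only [← hg a]
        field_simp
    _ = 1 / η * ∫ a, (p a - q a) * Real.log (q a / r a) ∂μ := by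
        rw [integral_sub_mul_add_const _ hp hq hpq hpqr hqr]
    _ = _ := by rw [integral_sub_mul_log_div hq0 hr0 hpr hpqr hqr]

end Integrals

noncomputable def mirrorWeight (η α q t : ℝ) : ℝ :=
  Real.exp ((η * q + Real.log t) / (η * α + 1))

noncomputable def mirrorNormalizer {A : Type*} [MeasurableSpace A] (μ : Measure A) (η α : ℝ)
    (Q p : A → ℝ) : ℝ :=
  ∫ a, mirrorWeight η α (Q a) (p a) ∂μ

noncomputable def mirrorStep {A : Type*} [MeasurableSpace A] (μ : Measure A) (η α : ℝ)
    (Q p : A → ℝ) (a : A) : ℝ :=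
  mirrorWeight η α (Q a) (p a) / mirrorNormalizer μ η α Q p

section MirrorStep

variable {A : Type*} [MeasurableSpace A] {μ : Measure A} {η α C b : ℝ} {Q p : A → ℝ}

theorem mirrorWeight_pos {q t : ℝ} : 0 < mirrorWeight η α q t := Real.exp_pos _

theorem mirrorWeight_le {q t : ℝ} (hη : 0 ≤ η) (hα : 0 ≤ α) (hq : q ≤ C) (ht : 0 < t)
    (htb : t ≤ b) : mirrorWeight η α q t ≤ mirrorWeight η α C b := by
  unfold mirrorWeight
  gcongr

theorem measurable_mirrorWeight (hQ : Measurable Q) (hp : Measurable p) :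
    Measurable fun a => mirrorWeight η α (Q a) (p a) :=
  (((hQ.const_mul η).add hp.log).div_const _).exp

theorem mirrorNormalizer_pos [IsFiniteMeasure μ] [NeZero μ] (hη : 0 ≤ η) (hα : 0 ≤ α)
    (hQm : Measurable Q) (hQC : ∀ a, |Q a| ≤ C) (hpm : Measurable p) (hp : ∀ a, 0 < p a)
    (hpb : ∀ a, p a ≤ b) : 0 < mirrorNormalizer μ η α Q p := by
  refine integral_exp_pos (.of_bound (measurable_mirrorWeight hQm hpm).aestronglyMeasurable
    (mirrorWeight η α C b) (ae_of_all _ fun a => ?_))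
  rw [Real.norm_eq_abs, abs_of_pos (Real.exp_pos _)]
  exact mirrorWeight_le hη hα ((le_abs_self _).trans (hQC a)) (hp a) (hpb a)

theorem mirrorStep_pos (hZ : 0 < mirrorNormalizer μ η α Q p) (a : A) :
    0 < mirrorStep μ η α Q p a :=
  div_pos mirrorWeight_pos hZ

theorem measurable_mirrorStep (hQ : Measurable Q) (hp : Measurable p) :
    Measurable (mirrorStep μ η α Q p) :=
  (measurable_mirrorWeight hQ hp).div_const _

theorem abs_mirrorStep_le (hη : 0 ≤ η) (hα : 0 ≤ α) (hQC : ∀ a, |Q a| ≤ C) (hp : ∀ a, 0 < p a)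
    (hpb : ∀ a, p a ≤ b) (hZ : 0 < mirrorNormalizer μ η α Q p) (a : A) :
    |mirrorStep μ η α Q p a| ≤ mirrorWeight η α C b / mirrorNormalizer μ η α Q p := by
  rw [abs_of_pos (mirrorStep_pos hZ a)]
  exact div_le_div_of_nonneg_right
    (mirrorWeight_le hη hα ((le_abs_self _).trans (hQC a)) (hp a) (hpb a)) hZ.le

theorem integrable_mirrorStep [IsFiniteMeasure μ] (hη : 0 ≤ η) (hα : 0 ≤ α) (hQm : Measurable Q)
    (hQC : ∀ a, |Q a| ≤ C) (hpm : Measurable p) (hp : ∀ a, 0 < p a) (hpb : ∀ a, p a ≤ b)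
    (hZ : 0 < mirrorNormalizer μ η α Q p) : Integrable (mirrorStep μ η α Q p) μ :=
  .of_bound (measurable_mirrorStep hQm hpm).aestronglyMeasurable _
    (ae_of_all _ (abs_mirrorStep_le hη hα hQC hp hpb hZ))

theorem integral_mirrorStep (hZ : mirrorNormalizer μ η α Q p ≠ 0) :
    ∫ a, mirrorStep μ η α Q p a ∂μ = 1 := by
  simp only [mirrorStep]
  rw [integral_div, ← mirrorNormalizer, div_self hZ]

theorem log_mirrorStep (hZ : mirrorNormalizer μ η α Q p ≠ 0) (a : A) :
    Real.log (mirrorStep μ η α Q p a) =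
      (η * Q a + Real.log (p a)) / (η * α + 1) - Real.log (mirrorNormalizer μ η α Q p) := by
  rw [mirrorStep, Real.log_div mirrorWeight_pos.ne' hZ, mirrorWeight, Real.log_exp]

theorem log_mirrorStep_div (hs : η * α + 1 ≠ 0) (hZ : mirrorNormalizer μ η α Q p ≠ 0)
    (hp : ∀ a, p a ≠ 0) (a : A) :
    Real.log (mirrorStep μ η α Q p a / p a) = (η * Q a - η * α * Real.log (p a)) / (η * α + 1) -
      Real.log (mirrorNormalizer μ η α Q p) := by
  have hm : mirrorStep μ η α Q p a ≠ 0 := div_ne_zero mirrorWeight_pos.ne' hZ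
  rw [Real.log_div hm (hp a), log_mirrorStep hZ]
  field_simp
  ring

theorem mul_sub_mul_log_mirrorStep (hs : η * α + 1 ≠ 0) (hZ : mirrorNormalizer μ η α Q p ≠ 0)
    (hp : ∀ a, p a ≠ 0) (a : A) :
    η * (Q a - α * Real.log (mirrorStep μ η α Q p a)) = Real.log (mirrorStep μ η α Q p a / p a) +
      (η * α + 1) * Real.log (mirrorNormalizer μ η α Q p) := by
  rw [log_mirrorStep_div hs hZ hp, log_mirrorStep hZ]
  field_simp
  ring

theorem integrable_mul_log_mirrorStep_div {π : A → ℝ} (hs : η * α + 1 ≠ 0)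
    (hZ : mirrorNormalizer μ η α Q p ≠ 0) (hp : ∀ a, p a ≠ 0) (hπ : Integrable π μ)
    (hπQ : Integrable (fun a => π a * Q a) μ)
    (hπp : Integrable (fun a => π a * Real.log (p a)) μ) :
    Integrable (fun a => π a * Real.log (mirrorStep μ η α Q p a / p a)) μ := by
  have hexpand : ∀ a, π a * Real.log (mirrorStep μ η α Q p a / p a) =
      η / (η * α + 1) * (π a * Q a) - η * α / (η * α + 1) * (π a * Real.log (p a)) -
        Real.log (mirrorNormalizer μ η α Q p) * π a := fun a => by
    rw [log_mirrorStep_div hs hZ hp]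
    field_simp
  exact (((hπQ.const_mul _).sub (hπp.const_mul _)).sub (hπ.const_mul _)).congr
    (ae_of_all _ fun a => (hexpand a).symm)

theorem integrable_mirrorStep_mul_log_mirrorStep_div [IsFiniteMeasure μ] (hη : 0 ≤ η)
    (hα : 0 ≤ α) (hQm : Measurable Q) (hQC : ∀ a, |Q a| ≤ C) (hpm : Measurable p)
    (hp : ∀ a, 0 < p a) (hpb : ∀ a, p a ≤ b) (hZ : 0 < mirrorNormalizer μ η α Q p) :
    Integrable (fun a => mirrorStep μ η α Q p a * Real.log (mirrorStep μ η α Q p a / p a)) μ := by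
  set m := mirrorStep μ η α Q p
  have hmb := abs_mirrorStep_le hη hα hQC hp hpb hZ
  have hm : Integrable m μ := integrable_mirrorStep hη hα hQm hQC hpm hp hpb hZ
  have hexpand : ∀ a, m a * Real.log (m a / p a) = η * (m a * Q a) -
      η * α * (m a * Real.log (m a)) - (η * α + 1) * Real.log (mirrorNormalizer μ η α Q p) * m a :=
    fun a => by
      rw [eq_sub_of_add_eq (mul_sub_mul_log_mirrorStep (by positivity) hZ.ne'
        (fun a => (hp a).ne') a).symm]
      ring
  exact ((((hm.mul_bdd hQm.aestronglyMeasurable (ae_of_all _ hQC)).const_mul _).sub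
    ((integrable_mul_log_of_abs_le (measurable_mirrorStep hQm hpm) hmb).const_mul _)).sub
      (hm.const_mul _)).congr (ae_of_all _ fun a => (hexpand a).symm)

end MirrorStep

theorem stmt_15_general {A : Type*} [MeasurableSpace A] (μ : Measure A) [IsFiniteMeasure μ]
    (Qt : A → ℝ) (hQm : Measurable Qt) (C : ℝ) (hQb : ∀ a, |Qt a| ≤ C)
    (πt : A → ℝ) (hπtm : Measurable πt) (hπt0 : ∀ a, 0 < πt a)
    (bt : ℝ) (hπtb : ∀ a, πt a ≤ bt)
    (η α : ℝ) (hη : 0 < η) (hα : 0 ≤ α)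
    (Z : ℝ)
    (hZ : Z = ∫ a, Real.exp ((η * Qt a + Real.log (πt a)) / (η * α + 1)) ∂μ)
    (πt1 : A → ℝ)
    (hπt1def : ∀ a, πt1 a = Real.exp ((η * Qt a + Real.log (πt a)) / (η * α + 1)) / Z)
    (π : A → ℝ)
    (hπ1 : ∫ a, π a ∂μ = 1)
    (hint1 : Integrable (fun a => π a * Qt a) μ)
    (hint2 : Integrable (fun a => π a * Real.log (π a)) μ)
    (hint3 : Integrable (fun a => π a * Real.log (πt a)) μ) :
    ∫ a, (Qt a - α * Real.log (πt1 a)) * (π a - πt1 a) ∂μ ≤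
      (1 / η) *
        ((∫ a, π a * Real.log (π a / πt a) ∂μ) -
          (∫ a, πt1 a * Real.log (πt1 a / πt a) ∂μ) -
          (∫ a, π a * Real.log (π a / πt1 a) ∂μ)) := by
  subst hZ
  obtain rfl : πt1 = mirrorStep μ η α Qt πt := funext hπt1def
  have : NeZero μ := ⟨fun h => by simp [h] at hπ1⟩
  have hs : η * α + 1 ≠ 0 := by positivity
  have hπt0' : ∀ a, πt a ≠ 0 := fun a => (hπt0 a).ne'
  have hZ := mirrorNormalizer_pos hη.le hα hQm hQb hπtm hπt0 hπtb (μ := μ)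
  have hπ : Integrable π μ := integrable_of_integral_eq_one hπ1
  have hKL : Integrable (fun a => π a * Real.log (π a / πt a)) μ := by
    simp only [mul_log_div_eq_mul_log_sub _ (hπt0' _)]
    exact hint2.sub hint3
  refine (integral_mul_sub_eq_of_mul_eq_log_div_add hη.ne'
    (mul_sub_mul_log_mirrorStep hs hZ.ne' hπt0') hπ
    (integrable_mirrorStep hη.le hα hQm hQb hπtm hπt0 hπtb hZ)
    (hπ1.trans (integral_mirrorStep hZ.ne').symm) (fun a => (mirrorStep_pos hZ a).ne') hπt0' hKL
    (integrable_mul_log_mirrorStep_div hs hZ.ne' hπt0' hπ hint1 hint3)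
    (integrable_mirrorStep_mul_log_mirrorStep_div hη.le hα hQm hQb hπtm hπt0 hπtb hZ)).le

/-- First-order optimality of the mirror-descent update combined with the three-point
KL identity: with `π_{t+1}(a) = exp((η·Q_t(a) + log π_t(a))/(ηα+1)) / Z`, every strictly
positive probability density `π` with the relevant integrals finite satisfies
`∫ (Q_t − α·log π_{t+1})·(π − π_{t+1}) dμ ≤
  (1/η)·(KL(π, π_t) − KL(π_{t+1}, π_t) − KL(π, π_{t+1}))`. -/
theorem stmt_15 {A : Type*} [MeasurableSpace A] (μ : Measure A) [IsFiniteMeasure μ]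
    (Qt : A → ℝ) (hQm : Measurable Qt) (C : ℝ) (hQb : ∀ a, |Qt a| ≤ C)
    (πt : A → ℝ) (hπtm : Measurable πt) (hπt0 : ∀ a, 0 < πt a)
    (bt : ℝ) (hπtb : ∀ a, πt a ≤ bt) (hπt1 : ∫ a, πt a ∂μ = 1)
    (η α : ℝ) (hη : 0 < η) (hα : 0 ≤ α)
    (Z : ℝ)
    (hZ : Z = ∫ a, Real.exp ((η * Qt a + Real.log (πt a)) / (η * α + 1)) ∂μ)
    (πt1 : A → ℝ)
    (hπt1def : ∀ a, πt1 a = Real.exp ((η * Qt a + Real.log (πt a)) / (η * α + 1)) / Z)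
    (π : A → ℝ) (hπm : Measurable π) (hπ0 : ∀ a, 0 < π a)
    (hπ1 : ∫ a, π a ∂μ = 1)
    (hint1 : Integrable (fun a => π a * Qt a) μ)
    (hint2 : Integrable (fun a => π a * Real.log (π a)) μ)
    (hint3 : Integrable (fun a => π a * Real.log (πt a)) μ) :
    ∫ a, (Qt a - α * Real.log (πt1 a)) * (π a - πt1 a) ∂μ ≤
      (1 / η) *
        ((∫ a, π a * Real.log (π a / πt a) ∂μ) -
          (∫ a, πt1 a * Real.log (πt1 a / πt a) ∂μ) -
          (∫ a, π a * Real.log (π a / πt1 a) ∂μ)) :=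
  stmt_15_general μ Qt hQm C hQb πt hπtm hπt0 bt hπtb η α hη hα Z hZ πt1 hπt1def π hπ1 hint1 hint2
    hint3
end
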